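/- arXiv:math/0610281 — 5 statements merged into one kernel-verified Lean document; each statement's English description precedes it below -/
import Mathlib

section
/- For every natural number n, ∑_{k=0}^{n} (-1)^k · C(n+k,k) · C(n,k) · (1 + 2k(H_{n+k} − H_k)) = (-1)^n (2n+1), as an identity of rational numbers. -/
open Finset

/-- Harmonic numbers `H_n = ∑_{j=1}^n 1/j`. -/
def H (n : ℕ) : ℚ := ∑ j ∈ Icc 1 n, (1 : ℚ) / j

/-!
Write `c_k = (-1)^k C(n+k,k) C(n,k)`. Since `k (H_{n+k} - H_k) = n - ∑_{j=1}^n j / (j + k)`,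
the sum equals `(2n+1) ∑_k c_k - 2 ∑_j j ∑_k c_k / (j + k)`. Both inner sums come from Lagrange
interpolation of `(1 - X) ⋯ (n - X)` at the nodes `0, -1, …, -n`, where the barycentric weight
times the value at `-k` is exactly `c_k`: the leading coefficient gives `∑_k c_k = (-1)^n`, and
the partial fraction decomposition `∑_k c_k / (x + k) = (1 - x) ⋯ (n - x) / (x (x + 1) ⋯ (x + n))`
vanishes at `x = 1, …, n`.
-/

open Polynomial Lagrange
open scoped Nat

theorem prod_erase_range_natCast_sub {R : Type*} [CommRing R] {n k : ℕ} (hk : k ≤ n) :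
    ∏ j ∈ (range (n + 1)).erase k, ((j : R) - k) = (-1) ^ k * k ! * (n - k)! := by
  have hsplit : (range (n + 1)).erase k = range k ∪ Ico (k + 1) (n + 1) := by
    ext i; simp only [mem_erase, mem_range, mem_union, mem_Ico]; omega
  have hdisj : Disjoint (range k) (Ico (k + 1) (n + 1)) := by
    rw [disjoint_left]; intro i hi hi'; simp only [mem_range, mem_Ico] at hi hi'; omega
  have below : ∏ j ∈ range k, ((j : R) - k) = (-1) ^ k * k ! := by
    rw [← prod_range_reflect]
    calc ∏ j ∈ range k, (((k - 1 - j : ℕ) : R) - k) = ∏ j ∈ range k, -((j : R) + 1) := by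
          refine prod_congr rfl fun j hj => ?_
          rw [Nat.cast_sub (by grind), Nat.cast_sub (by grind)]
          push_cast; ring
      _ = (-1) ^ k * k ! := by
          rw [prod_neg, card_range, ← prod_range_add_one_eq_factorial]; push_cast; rfl
  have above : ∏ j ∈ Ico (k + 1) (n + 1), ((j : R) - k) = (n - k)! := by
    rw [prod_Ico_eq_prod_range, ← prod_range_add_one_eq_factorial,
      show n + 1 - (k + 1) = n - k by omega]
    push_cast
    exact prod_congr rfl fun i _ => by ring
  rw [hsplit, prod_union hdisj, below, above]

section PartialFractions

/-- `(1 - X) (2 - X) ⋯ (n - X)` -/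
noncomputable def numeratorPoly (K : Type*) [Field K] (n : ℕ) : K[X] :=
  C ((-1 : K) ^ n) * nodal (range n) (fun i => (i : K) + 1)

variable {K : Type*} [Field K] [CharZero K]

theorem injOn_neg_natCast (s : Set ℕ) : Set.InjOn (fun i : ℕ => -(i : K)) s :=
  (neg_injective.comp Nat.cast_injective).injOn

theorem degree_numeratorPoly_lt (n : ℕ) : (numeratorPoly K n).degree < #(range (n + 1)) := by
  rw [numeratorPoly, degree_C_mul (by simp), degree_nodal, card_range, card_range]
  exact_mod_cast n.lt_succ_self

/-- The barycentric weight of the node `-k` times the value there. -/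
theorem eval_numeratorPoly_div_prod_erase {n k : ℕ} (hk : k ≤ n) :
    (numeratorPoly K n).eval (-(k : K)) /
        ∏ j ∈ (range (n + 1)).erase k, (-(k : K) - -(j : K)) =
      (-1) ^ k * (n + k).choose k * n.choose k := by
  have hnodes :
      ∏ j ∈ (range (n + 1)).erase k, (-(k : K) - -(j : K)) = (-1) ^ k * k ! * (n - k)! := by
    rw [← prod_erase_range_natCast_sub hk]
    exact prod_congr rfl fun _ _ => by ring
  have heval : (numeratorPoly K n).eval (-(k : K)) = ∏ i ∈ range n, ((k : K) + 1 + i) := by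
    have hfactor : ∀ i ∈ range n, -(k : K) - ((i : K) + 1) = -((k : K) + 1 + i) :=
      fun _ _ => by ring
    rw [numeratorPoly, eval_mul, eval_C, eval_nodal, prod_congr rfl hfactor, prod_neg, card_range,
      ← mul_assoc, ← mul_pow]
    norm_num
  have hascFactorial : (k ! : K) * ∏ i ∈ range n, ((k : K) + 1 + i) = (n + k)! := by
    rw [add_comm n k, ← Nat.factorial_mul_ascFactorial, Nat.ascFactorial_eq_prod_range]
    push_cast; rfl
  have hchoose₁ := congrArg (Nat.cast (R := K)) (Nat.add_choose_mul_factorial_mul_factorial n k)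
  have hchoose₂ := congrArg (Nat.cast (R := K)) (Nat.choose_mul_factorial_mul_factorial hk)
  push_cast at hchoose₁ hchoose₂
  have hsign : (-1 : K) ^ k * (-1) ^ k = 1 := by rw [← mul_pow]; norm_num
  rw [hnodes, heval, div_eq_iff (by simp [Nat.factorial_ne_zero])]
  apply mul_left_cancel₀ (Nat.cast_ne_zero.mpr (Nat.factorial_ne_zero k) : (k ! : K) ≠ 0)
  linear_combination hascFactorial - hchoose₁ - ((n + k).choose k * k ! : K) * hchoose₂ -
    ((n + k).choose k * n.choose k * k ! * (n - k)! * k ! : K) * hsign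

theorem sum_neg_one_pow_mul_add_choose_mul_choose (n : ℕ) :
    ∑ k ∈ range (n + 1), (-1 : K) ^ k * (n + k).choose k * n.choose k = (-1) ^ n := by
  have hcoeff := coeff_eq_sum (injOn_neg_natCast _) (degree_numeratorPoly_lt (K := K) n)
  have hmonic : (nodal (range n) (fun i => (i : K) + 1)).coeff n = 1 := by
    simpa [natDegree_nodal] using
      (nodal_monic (s := range n) (v := fun i => (i : K) + 1)).coeff_natDegree
  rw [card_range, Nat.add_sub_cancel, numeratorPoly, coeff_C_mul, hmonic, mul_one] at hcoeff
  rw [hcoeff]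
  exact (sum_congr rfl fun k hk =>
    eval_numeratorPoly_div_prod_erase (Nat.lt_succ_iff.mp (mem_range.mp hk))).symm

theorem sum_neg_one_pow_mul_add_choose_mul_choose_div (n : ℕ) {x : K}
    (hx : ∀ i ∈ range (n + 1), x + i ≠ 0) :
    ∑ k ∈ range (n + 1), (-1 : K) ^ k * (n + k).choose k * n.choose k / (x + k) =
      (-1) ^ n * (∏ i ∈ range n, (x - (i + 1))) / ∏ i ∈ range (n + 1), (x + i) := by
  have hx' : ∀ i ∈ range (n + 1), x ≠ -(i : K) := fun i hi h => hx i hi (by rw [h]; ring)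
  have h := eval_interpolate_not_at_node (v := fun i : ℕ => -(i : K))
    (fun i => (numeratorPoly K n).eval (-(i : K))) hx'
  rw [← eq_interpolate (injOn_neg_natCast _) (degree_numeratorPoly_lt n)] at h
  have hterm : ∀ k ∈ range (n + 1), nodalWeight (range (n + 1)) (fun i : ℕ => -(i : K)) k *
      (x - -(k : K))⁻¹ * (numeratorPoly K n).eval (-(k : K)) =
        (-1) ^ k * (n + k).choose k * n.choose k / (x + k) := by
    intro k hk
    rw [nodalWeight, prod_inv_distrib,
      ← eval_numeratorPoly_div_prod_erase (Nat.lt_succ_iff.mp (mem_range.mp hk)), sub_neg_eq_add]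
    ring
  have hnodal : ∏ i ∈ range (n + 1), (x + i) ≠ 0 := prod_ne_zero_iff.mpr hx
  rw [sum_congr rfl hterm, eval_nodal, numeratorPoly, eval_mul, eval_C, eval_nodal] at h
  simp only [sub_neg_eq_add] at h
  rw [eq_div_iff hnodal, h, mul_comm]

theorem sum_neg_one_pow_mul_add_choose_mul_choose_div_eq_zero {n j : ℕ} (hj : j ∈ Icc 1 n) :
    ∑ k ∈ range (n + 1), (-1 : K) ^ k * (n + k).choose k * n.choose k / (j + k) = 0 := by
  obtain ⟨hj₁, hjn⟩ := mem_Icc.mp hj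
  have hroot : ∏ i ∈ range n, ((j : K) - (i + 1)) = 0 :=
    prod_eq_zero (i := j - 1) (mem_range.mpr (by omega)) (by rw [Nat.cast_sub hj₁]; ring)
  rw [sum_neg_one_pow_mul_add_choose_mul_choose_div n
    fun i _ => by exact_mod_cast (by omega : j + i ≠ 0), hroot, mul_zero, zero_div]

end PartialFractions

theorem H_succ (n : ℕ) : H (n + 1) = H n + 1 / (n + 1) := by
  rw [H, H, sum_Icc_succ_top (by omega)]
  push_cast; rfl

theorem H_add_sub_H (n k : ℕ) : H (n + k) - H k = ∑ j ∈ Icc 1 n, 1 / ((j : ℚ) + k) := by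
  induction n with
  | zero => simp
  | succ n ih =>
    rw [add_right_comm, H_succ, sum_Icc_succ_top (by omega), ← ih]
    push_cast; ring

theorem one_add_two_mul_H_add_sub_H (n k : ℕ) :
    1 + 2 * k * (H (n + k) - H k) = 2 * n + 1 - 2 * ∑ j ∈ Icc 1 n, j / ((j : ℚ) + k) := by
  have hsplit : ∀ j ∈ Icc 1 n, 2 * k * (1 / ((j : ℚ) + k)) = 2 - 2 * (j / ((j : ℚ) + k)) := by
    intro j hj
    have hj₁ : 1 ≤ j := (mem_Icc.mp hj).1
    have : (j : ℚ) + k ≠ 0 := by positivity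
    field_simp
    ring
  rw [H_add_sub_H, mul_sum, sum_congr rfl hsplit, sum_sub_distrib, ← mul_sum, sum_const,
    Nat.card_Icc, Nat.add_sub_cancel, nsmul_eq_mul]
  ring

theorem stmt_1 (n : ℕ) :
    ∑ k ∈ range (n + 1), (-1 : ℚ) ^ k * (Nat.choose (n + k) k) * (Nat.choose n k) *
      (1 + 2 * k * (H (n + k) - H k)) = (-1 : ℚ) ^ n * (2 * n + 1) := by
  have hvanish : ∑ k ∈ range (n + 1), (-1 : ℚ) ^ k * (n + k).choose k * n.choose k *
      (2 * ∑ j ∈ Icc 1 n, j / ((j : ℚ) + k)) = 0 := by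
    calc _ = 2 * ∑ j ∈ Icc 1 n, (j : ℚ) *
          ∑ k ∈ range (n + 1), (-1 : ℚ) ^ k * (n + k).choose k * n.choose k / (j + k) := by
          simp_rw [mul_sum]
          rw [sum_comm]
          exact sum_congr rfl fun _ _ => sum_congr rfl fun _ _ => by ring
      _ = 0 := by
          rw [sum_eq_zero fun j hj => by
            rw [sum_neg_one_pow_mul_add_choose_mul_choose_div_eq_zero hj, mul_zero], mul_zero]
  simp_rw [one_add_two_mul_H_add_sub_H, mul_sub]
  rw [sum_sub_distrib, hvanish, ← sum_mul, sum_neg_one_pow_mul_add_choose_mul_choose, sub_zero]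
end

section
/- For every natural number n ≥ 1, ∑_{j=1}^{n} (-1)^j · C(n+j,j) · C(n,j) = -1 + (-1)^n. -/
/-! Adding the term j = 0, the sum becomes the value at 1 of the shifted Legendre polynomial Pₙ,
and the reflection symmetry Pₙ(1 - x) = (-1)ⁿ Pₙ(x) gives Pₙ(1) = (-1)ⁿ Pₙ(0) = (-1)ⁿ. -/

open Finset

namespace Polynomial

theorem shiftedLegendre_eval_zero (n : ℕ) : (shiftedLegendre n).eval 0 = 1 := by
  simp [← coeff_zero_eq_eval_zero, coeff_shiftedLegendre]

theorem shiftedLegendre_eval_one (n : ℕ) : (shiftedLegendre n).eval 1 = (-1) ^ n := by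
  simpa [shiftedLegendre_eval_zero] using shiftedLegendre_eval_symm n (1 : ℤ)

end Polynomial

theorem sum_range_neg_one_pow_mul_add_choose_mul_choose (n : ℕ) :
    ∑ j ∈ range (n + 1), (-1 : ℤ) ^ j * (n + j).choose j * n.choose j = (-1) ^ n := by
  rw [← Polynomial.shiftedLegendre_eval_one, Polynomial.shiftedLegendre,
    Polynomial.eval_finsetSum]
  refine sum_congr rfl fun j _ => ?_
  simp only [Polynomial.eval_mul, Polynomial.eval_C, Polynomial.eval_pow, Polynomial.eval_X,
    one_pow, mul_one]
  rw [Nat.choose_symm_add]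
  ring

theorem stmt_2_general (n : ℕ) :
    ∑ j ∈ Icc 1 n, (-1 : ℤ) ^ j * (Nat.choose (n + j) j) * (Nat.choose n j) =
      -1 + (-1 : ℤ) ^ n := by
  rw [← sum_range_neg_one_pow_mul_add_choose_mul_choose, sum_range_eq_add_Ico _ n.add_one_pos,
    Ico_add_one_right_eq_Icc]
  simp

theorem stmt_2 (n : ℕ) (hn : 1 ≤ n) :
    ∑ j ∈ Icc 1 n, (-1 : ℤ) ^ j * (Nat.choose (n + j) j) * (Nat.choose n j) =
      -1 + (-1 : ℤ) ^ n :=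
  stmt_2_general n
end

section
/- For every natural number n, ∑_{k=1}^{n} (-1)^k / (C(n+k,k) · C(n,k)) = n(2n−1)(-1)^n − [ (1+n)^2 (n^2 − 2n − 2) · (n!)^2 · (-1)^n / (2 · (2n+2)!) + (1/4) · n · (3n^3 + 6n^2 + 11n − 4) · (-1)^n − (1/2)(n^2 + n − 1) + (3/2) · n^2 (1+n)^2 (-1)^n · ∑_{i=1}^{n} (i!)^2/(2i+2)! + n^2 (1+n)^2 (-1)^n · ∑_{i=1}^{n} (-1)^i / i^2 ], as an identity of rational numbers. -/
/-!
Creative telescoping. For the summand `t n k = (-1)^k k!² (n-k)! / (n+k)!`, Zeilberger's algorithm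
yields the certificate `G n k = -2 (n+1) (-1)^k k!² (n+1-k)! / (n+k)!` with
`n² t (n+1) k + (n+2)² t n k = G n (k+1) - G n k` for `k ≤ n`. Summing over `1 ≤ k ≤ n` gives a
first-order recurrence for `S n = ∑ t n k` whose leading coefficient `n²` vanishes only at `n = 0`.
The right-hand side satisfies the same recurrence (a rational-function identity once the two
partial sums are peeled off) and agrees with `S` at `n = 1`.
-/

open Finset
open scoped Nat

namespace InvChooseSum

noncomputable def term (n k : ℕ) : ℚ :=
  (-1) ^ k * (k ! : ℚ) ^ 2 * ((n - k)! : ℚ) / ((n + k)! : ℚ)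

noncomputable def certificate (n k : ℕ) : ℚ :=
  -2 * ((n : ℚ) + 1) * (-1) ^ k * (k ! : ℚ) ^ 2 * ((n + 1 - k)! : ℚ) / ((n + k)! : ℚ)

lemma neg_one_pow_div_choose_mul_choose {n k : ℕ} (hk : k ≤ n) :
    (-1 : ℚ) ^ k / ((n + k).choose k * n.choose k) = term n k := by
  rw [Nat.cast_choose ℚ hk, Nat.cast_choose ℚ (Nat.le_add_left k n), Nat.add_sub_cancel, term]
  field_simp

lemma term_succ_add_term (n k : ℕ) (hk : k ≤ n) :
    (n : ℚ) ^ 2 * term (n + 1) k + ((n : ℚ) + 2) ^ 2 * term n k =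
      certificate n (k + 1) - certificate n k := by
  obtain ⟨j, rfl⟩ := Nat.exists_eq_add_of_le hk
  rw [term, term, certificate, certificate, show k + j + 1 - k = j + 1 by omega,
    show k + j + 1 - (k + 1) = j by omega, Nat.add_sub_cancel_left,
    show k + j + 1 + k = (k + j + k) + 1 by omega, show k + j + (k + 1) = (k + j + k) + 1 by omega,
    Nat.factorial_succ, Nat.factorial_succ, Nat.factorial_succ k]
  push_cast
  field_simp
  ring

lemma sum_term_recurrence (n : ℕ) :
    (n : ℚ) ^ 2 * ∑ k ∈ Icc 1 (n + 1), term (n + 1) k + ((n : ℚ) + 2) ^ 2 * ∑ k ∈ Icc 1 n, term n k =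
      (n : ℚ) ^ 2 * term (n + 1) (n + 1) + certificate n (n + 1) - certificate n 1 := by
  have telescope : ∑ k ∈ Icc 1 n, ((n : ℚ) ^ 2 * term (n + 1) k + ((n : ℚ) + 2) ^ 2 * term n k) =
      certificate n (n + 1) - certificate n 1 := by
    rw [← Ico_add_one_right_eq_Icc, ← sum_Ico_sub (certificate n) (by omega)]
    exact sum_congr rfl fun k hk ↦ term_succ_add_term n k (Nat.lt_succ_iff.1 (mem_Ico.1 hk).2)
  rw [sum_Icc_succ_top (by omega), mul_add, add_right_comm, mul_sum, mul_sum, ← sum_add_distrib,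
    telescope]
  ring

noncomputable def closedForm (n : ℕ) : ℚ :=
  (n : ℚ) * (2 * n - 1) * (-1 : ℚ) ^ n -
    ((1 + (n : ℚ)) ^ 2 * ((n : ℚ) ^ 2 - 2 * n - 2) * (n ! : ℚ) ^ 2 * (-1 : ℚ) ^ n /
        (2 * ((2 * n + 2)! : ℚ))
      + (1 / 4 : ℚ) * n * (3 * (n : ℚ) ^ 3 + 6 * (n : ℚ) ^ 2 + 11 * n - 4) * (-1 : ℚ) ^ n
      - (1 / 2 : ℚ) * ((n : ℚ) ^ 2 + n - 1)
      + (3 / 2 : ℚ) * (n : ℚ) ^ 2 * (1 + (n : ℚ)) ^ 2 * (-1 : ℚ) ^ n *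
          ∑ i ∈ Icc 1 n, (i ! : ℚ) ^ 2 / ((2 * i + 2)! : ℚ)
      + (n : ℚ) ^ 2 * (1 + (n : ℚ)) ^ 2 * (-1 : ℚ) ^ n *
          ∑ i ∈ Icc 1 n, (-1 : ℚ) ^ i / (i : ℚ) ^ 2)

lemma closedForm_recurrence (n : ℕ) :
    (n : ℚ) ^ 2 * closedForm (n + 1) + ((n : ℚ) + 2) ^ 2 * closedForm n =
      (n : ℚ) ^ 2 * term (n + 1) (n + 1) + certificate n (n + 1) - certificate n 1 := by
  rw [closedForm, closedForm, term, certificate, certificate,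
    sum_Icc_succ_top (Nat.le_add_left 1 n) (fun i ↦ (i ! : ℚ) ^ 2 / ((2 * i + 2)! : ℚ)),
    sum_Icc_succ_top (Nat.le_add_left 1 n) (fun i : ℕ ↦ (-1 : ℚ) ^ i / (i : ℚ) ^ 2),
    Nat.sub_self, Nat.add_sub_cancel, show 2 * (n + 1) + 2 = (2 * n + 2) + 1 + 1 by ring,
    show n + 1 + (n + 1) = 2 * n + 2 by ring, show n + (n + 1) = 2 * n + 1 by ring]
  -- `set` keeps `push_cast` and `field_simp` out of the two partial sums.
  set A := ∑ i ∈ Icc 1 n, (i ! : ℚ) ^ 2 / ((2 * i + 2)! : ℚ)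
  set B := ∑ i ∈ Icc 1 n, (-1 : ℚ) ^ i / (i : ℚ) ^ 2
  simp only [Nat.factorial_succ, Nat.factorial_zero, pow_succ (-1 : ℚ) n]
  push_cast
  rcases neg_one_pow_eq_or ℚ n with h | h <;> rw [h] <;> field_simp <;> ring

lemma sum_term_eq_closedForm (n : ℕ) : ∑ k ∈ Icc 1 n, term n k = closedForm n := by
  rcases Nat.eq_zero_or_pos n with rfl | hn
  · norm_num [closedForm]
  induction n, hn using Nat.le_induction with
  | base => norm_num [closedForm, term]
  | succ n hn ih =>
    have hn0 : (n : ℚ) ^ 2 ≠ 0 := pow_ne_zero 2 (Nat.cast_ne_zero.2 (by omega))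
    refine mul_left_cancel₀ hn0 ?_
    linear_combination sum_term_recurrence n - closedForm_recurrence n - ((n : ℚ) + 2) ^ 2 * ih

end InvChooseSum

theorem stmt_9 (n : ℕ) :
    ∑ k ∈ Icc 1 n, (-1 : ℚ) ^ k / ((Nat.choose (n + k) k : ℚ) * (Nat.choose n k)) =
      (n : ℚ) * (2 * n - 1) * (-1 : ℚ) ^ n -
        ((1 + (n : ℚ)) ^ 2 * ((n : ℚ) ^ 2 - 2 * n - 2) * (Nat.factorial n : ℚ) ^ 2 * (-1 : ℚ) ^ n /
            (2 * (Nat.factorial (2 * n + 2) : ℚ))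
          + (1 / 4 : ℚ) * n * (3 * (n : ℚ) ^ 3 + 6 * (n : ℚ) ^ 2 + 11 * n - 4) * (-1 : ℚ) ^ n
          - (1 / 2 : ℚ) * ((n : ℚ) ^ 2 + n - 1)
          + (3 / 2 : ℚ) * (n : ℚ) ^ 2 * (1 + (n : ℚ)) ^ 2 * (-1 : ℚ) ^ n *
              ∑ i ∈ Icc 1 n, (Nat.factorial i : ℚ) ^ 2 / (Nat.factorial (2 * i + 2) : ℚ)
          + (n : ℚ) ^ 2 * (1 + (n : ℚ)) ^ 2 * (-1 : ℚ) ^ n *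
              ∑ i ∈ Icc 1 n, (-1 : ℚ) ^ i / (i : ℚ) ^ 2) := by
  rw [sum_congr rfl fun k hk ↦ InvChooseSum.neg_one_pow_div_choose_mul_choose (mem_Icc.1 hk).2]
  exact InvChooseSum.sum_term_eq_closedForm n
end

section
/- For every positive integer n, ∑_{i=0}^{n} (-1)^i · C(n+i,i) · C(n,i) / (n+i)^2 = −(-1)^n · (n!)^2 / (n^2 · (2n)!), as an identity of rational numbers. -/
/-!
Write `C(n+i, i) / (n+i) = Q(i) / n!` with `Q(t) = (t+1)⋯(t+n-1)`, a polynomial of degree `n-1`.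
For a polynomial `P` of degree at most `n` one has the partial-fraction identity
`∑ (-1)^i C(n,i) P(i) / (x+i) = n! P(-x) / (x(x+1)⋯(x+n))`: the quotient of `P(t) - P(-x)` by
`t + x` has degree `< n`, so its `n`-th forward difference vanishes, and
`∑ (-1)^i C(n,i) / (x+i)` is, up to sign, the `n`-th forward difference of `t ↦ 1/t`.
Taking `P = Q` and `x = n` gives `Q(-n) = (-1)^(n-1) (n-1)!` over `n(n+1)⋯(2n) = (2n)! / (n-1)!`.
-/

open Finset Polynomial fwdDiff
open scoped Nat

theorem sum_neg_one_pow_mul_choose_mul_eq_fwdDiff_iter {R : Type*} [CommRing R]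
    (f : R → R) (n : ℕ) (y : R) :
    ∑ i ∈ range (n + 1), (-1) ^ i * n.choose i * f (y + i) = (-1) ^ n * (Δ_[1])^[n] f y := by
  rw [fwdDiff_iter_eq_sum_shift, mul_sum]
  refine sum_congr rfl fun i hi ↦ ?_
  obtain ⟨j, rfl⟩ := Nat.exists_eq_add_of_le (mem_range_succ_iff.mp hi)
  rw [Nat.add_sub_cancel_left, nsmul_one, zsmul_eq_mul]
  push_cast
  have hj : ((-1 : R) ^ j) ^ 2 = 1 := by rw [← pow_mul, mul_comm, pow_mul]; simp
  linear_combination -(-1) ^ i * ↑((i + j).choose i) * f (y + i) * hj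

theorem Polynomial.sum_neg_one_pow_mul_choose_mul_eval_eq_zero {R : Type*} [CommRing R]
    {P : R[X]} {n : ℕ} (hP : P.degree < n) :
    ∑ i ∈ range (n + 1), (-1) ^ i * n.choose i * P.eval (i : R) = 0 := by
  rcases eq_or_ne P 0 with rfl | hP0
  · simp
  simpa [fwdDiff_iter_eq_zero_of_degree_lt ((natDegree_lt_iff_degree_lt hP0).mpr hP)] using
    sum_neg_one_pow_mul_choose_mul_eq_fwdDiff_iter P.eval n 0

theorem fwdDiff_iter_inv {K : Type*} [Field K] (n : ℕ) {x : K}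
    (hx : (ascPochhammer K (n + 1)).eval x ≠ 0) :
    (Δ_[1])^[n] (fun t : K ↦ t⁻¹) x = (-1) ^ n * n ! / (ascPochhammer K (n + 1)).eval x := by
  induction n generalizing x with
  | zero => simp
  | succ n ih =>
    have hleft :
        (ascPochhammer K (n + 1 + 1)).eval x = x * (ascPochhammer K (n + 1)).eval (x + 1) := by
      simp [ascPochhammer_succ_left K (n + 1)]
    have hright : (ascPochhammer K (n + 1 + 1)).eval x
        = (ascPochhammer K (n + 1)).eval x * (x + (n + 1)) := by
      rw [ascPochhammer_succ_eval (n + 1) x]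
      push_cast
      ring
    obtain ⟨-, hx1⟩ := mul_ne_zero_iff.mp (hleft ▸ hx)
    obtain ⟨hx2, -⟩ := mul_ne_zero_iff.mp (hright ▸ hx)
    rw [Function.iterate_succ_apply', fwdDiff, ih hx1, ih hx2, div_sub_div _ _ hx1 hx2,
      div_eq_div_iff (mul_ne_zero hx1 hx2) hx, Nat.factorial_succ]
    push_cast
    linear_combination (-1) ^ n * n ! * ((ascPochhammer K (n + 1)).eval x * hleft
      - (ascPochhammer K (n + 1)).eval (x + 1) * hright)

theorem Polynomial.sum_neg_one_pow_mul_choose_mul_eval_div_add {K : Type*} [Field K]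
    {P : K[X]} {n : ℕ} (hP : P.degree ≤ n) {x : K}
    (hx : (ascPochhammer K (n + 1)).eval x ≠ 0) :
    ∑ i ∈ range (n + 1), (-1) ^ i * n.choose i * P.eval (i : K) / (x + i)
      = n ! * P.eval (-x) / (ascPochhammer K (n + 1)).eval x := by
  set Q := P /ₘ (X - C (-x))
  have hQ : Q.degree < n := by
    rcases eq_or_ne P 0 with rfl | hP0
    · simp [Q]
    · exact (degree_divByMonic_lt P (X - C (-x)) hP0 (by simp)).trans_le hP
  have hx_add : ∀ i ∈ range (n + 1), x + i ≠ 0 := fun i hi h ↦ hx <|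
    (ascPochhammer_eval_eq_zero_iff _ x).mpr ⟨i, mem_range.mp hi, eq_neg_of_add_eq_zero_right h⟩
  have hsplit : ∀ i ∈ range (n + 1), (-1) ^ i * n.choose i * P.eval (i : K) / (x + i)
      = P.eval (-x) * ((-1) ^ i * n.choose i * (x + i)⁻¹)
        + (-1) ^ i * n.choose i * Q.eval (i : K) := by
    intro i hi
    have hPQ := congrArg (eval (i : K)) (modByMonic_add_div P (X - C (-x)))
    rw [modByMonic_X_sub_C_eq_C_eval] at hPQ
    simp only [eval_add, eval_C, eval_mul, eval_sub, eval_X, sub_neg_eq_add] at hPQ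
    rw [← hPQ]
    field_simp [hx_add i hi]
    ring
  have hbase : ∑ i ∈ range (n + 1), (-1) ^ i * n.choose i * (x + i)⁻¹
      = n ! / (ascPochhammer K (n + 1)).eval x := by
    refine (sum_neg_one_pow_mul_choose_mul_eq_fwdDiff_iter (·⁻¹) n x).trans ?_
    rw [fwdDiff_iter_inv n hx, ← mul_div_assoc, ← mul_assoc, ← mul_pow]
    simp
  rw [sum_congr rfl hsplit, sum_add_distrib, ← mul_sum, hbase,
    sum_neg_one_pow_mul_choose_mul_eval_eq_zero hQ]
  ring

theorem descPochhammer_eval_neg_one (R : Type*) [CommRing R] (m : ℕ) :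
    (descPochhammer R m).eval (-1) = (-1) ^ m * m ! := by
  have h := ascPochhammer_eval_neg_eq_descPochhammer R (-1) m
  rw [neg_neg, ascPochhammer_eval_one] at h
  rw [h, ← mul_assoc, ← mul_pow]
  simp

theorem ascPochhammer_eval_natCast_add_one {K : Type*} [Field K] [CharZero K] (m n : ℕ) :
    (ascPochhammer K n).eval ((m : K) + 1) = (m + n)! / m ! := by
  rw [eq_div_iff (Nat.cast_ne_zero.mpr m.factorial_ne_zero), mul_comm,
    factorial_mul_ascPochhammer]

theorem Nat.cast_add_choose_div_add {K : Type*} [Field K] [CharZero K] (m i : ℕ) :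
    ((m + 1 + i).choose i : K) / (m + 1 + i)
      = (descPochhammer K m).eval ((i : K) + m) / (m + 1)! := by
  rw [← Nat.choose_symm_add, Nat.cast_choose_eq_descPochhammer_div, descPochhammer_succ_left]
  simp only [eval_mul, eval_X, eval_comp, eval_sub, eval_one]
  push_cast
  have h : (m + 1 + i : K) ≠ 0 := by norm_cast; omega
  rw [div_right_comm, mul_div_cancel_left₀ _ h]
  ring_nf

theorem stmt_10 (n : ℕ) (hn : 0 < n) :
    ∑ i ∈ range (n + 1), (-1 : ℚ) ^ i * (Nat.choose (n + i) i) * (Nat.choose n i) /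
        ((n : ℚ) + i) ^ 2 =
      -(-1 : ℚ) ^ n * (Nat.factorial n : ℚ) ^ 2 / ((n : ℚ) ^ 2 * (Nat.factorial (2 * n))) := by
  obtain ⟨m, rfl⟩ : ∃ m, n = m + 1 := ⟨n - 1, by omega⟩
  set P : ℚ[X] := (descPochhammer ℚ m).comp (X + C (m : ℚ))
  have hP : P.degree ≤ ↑(m + 1) := by
    refine degree_le_natDegree.trans ?_
    rw [natDegree_comp, descPochhammer_natDegree, natDegree_X_add_C, mul_one]
    exact_mod_cast m.le_succ
  have hterm : ∀ i ∈ range (m + 1 + 1),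
      (-1 : ℚ) ^ i * (Nat.choose (m + 1 + i) i) * (Nat.choose (m + 1) i)
          / (((m + 1 : ℕ) : ℚ) + i) ^ 2
        = (-1) ^ i * (m + 1).choose i * P.eval (i : ℚ) / ((m + 1 : ℚ) + i) / (m + 1)! := by
    intro i _
    have h := Nat.cast_add_choose_div_add (K := ℚ) m i
    rw [div_eq_iff (by positivity)] at h
    simp only [P, eval_comp, eval_add, eval_X, eval_C]
    rw [h]
    field_simp
    push_cast
    ring
  rw [sum_congr rfl hterm, ← sum_div, sum_neg_one_pow_mul_choose_mul_eval_div_add hP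
    (ascPochhammer_pos _ _ (by positivity)).ne']
  simp only [P, eval_comp, eval_add, eval_X, eval_C]
  rw [show -((m : ℚ) + 1) + m = -1 by ring, descPochhammer_eval_neg_one,
    ascPochhammer_eval_natCast_add_one, show m + (m + 1 + 1) = 2 * (m + 1) by ring]
  field_simp
  push_cast [Nat.factorial_succ]
  ring
end

section
/- For every natural number n, ∑_{k=0}^{n} (-1)^k · C(n+k,k) · C(n,k) · H_{n+k} = (-1)^n · 2 H_n, as an identity of rational numbers. -/
/-!
Differentiate the Chu–Vandermonde identity `(x + y)ₙ = ∑ₖ C(n,k) (x)ₖ (y)ₙ₋ₖ` for falling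
factorials, which holds in every commutative ring. Evaluate it in the dual numbers `ℚ[ε]` at
`x = -(n+1) - ε`, `y = n`, so that `x + y = -1 - ε`; since `∏ (cᵢ + ε) = (∏ cᵢ)(1 + ε ∑ 1/cᵢ)`,
it becomes `∑ₖ (-1)ᵏ C(n+k,k) C(n,k) (1 + (H_{n+k} - H_n) ε) = (-1)ⁿ (1 + H_n ε)`.
The constant term says `∑ₖ (-1)ᵏ C(n+k,k) C(n,k) = (-1)ⁿ`, the `ε`-term says
`∑ₖ (-1)ᵏ C(n+k,k) C(n,k) (H_{n+k} - H_n) = (-1)ⁿ H_n`, and their sum is the claim.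
-/

open Finset

open Polynomial TrivSqZeroExt DualNumber
open scoped Nat

theorem descPochhammer_smeval_eq_prod_range {R : Type*} [CommRing R] (n : ℕ) (r : R) :
    (descPochhammer ℤ n).smeval r = ∏ j ∈ range n, (r - j) := by
  rw [← aeval_eq_smeval, aeval_def, ← eval_map, algebraMap_int_eq, descPochhammer_map,
    descPochhammer_eval_eq_prod_range]

theorem harmonic_add (m k : ℕ) :
    harmonic (m + k) = harmonic m + ∑ j ∈ range k, ((m + j + 1 : ℕ) : ℚ)⁻¹ :=
  sum_range_add _ _ _

theorem H_eq_harmonic (n : ℕ) : H n = harmonic n := by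
  simp only [H, harmonic_eq_sum_Icc, one_div]

theorem prod_inl_add_eps {K ι : Type*} [Field K] (s : Finset ι) {c : ι → K}
    (hc : ∀ i ∈ s, c i ≠ 0) :
    ∏ i ∈ s, (inl (c i) + ε : K[ε]) = (∏ i ∈ s, c i) • (1 + (∑ i ∈ s, (c i)⁻¹) • ε) := by
  classical
  induction s using Finset.induction_on with
  | empty => simp
  | insert a s ha ih =>
    rw [prod_insert ha, ih fun i hi => hc i (mem_insert_of_mem hi), prod_insert ha, sum_insert ha]
    have hca := hc a (mem_insert_self a s)
    ext
    · simp
    · simp only [TrivSqZeroExt.snd_mul, snd_smul, fst_smul, snd_add, fst_add, snd_one, fst_one,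
        snd_inl, fst_inl, snd_eps, fst_eps, smul_eq_mul, MulOpposite.smul_eq_mul_unop,
        MulOpposite.unop_op]
      field

theorem descPochhammer_smeval_neg_natCast_sub_eps (m k : ℕ) :
    (descPochhammer ℤ k).smeval (-((m : ℚ[ε]) + 1 + ε)) =
      ((-1) ^ k * (m + 1).ascFactorial k : ℚ) • (1 + (harmonic (m + k) - harmonic m) • ε) := by
  have hfactor : ∀ j ∈ range k,
      -((m : ℚ[ε]) + 1 + ε) - (j : ℚ[ε]) = -(inl ((m + j + 1 : ℕ) : ℚ) + ε) := by
    intro j _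
    push_cast [inl_add, inl_natCast, inl_one]
    ring
  rw [descPochhammer_smeval_eq_prod_range, prod_congr rfl hfactor, prod_neg,
    prod_inl_add_eps _ fun j _ => by positivity, harmonic_add, add_sub_cancel_left,
    Nat.ascFactorial_eq_prod_range, card_range, mul_smul, Algebra.smul_def ((-1 : ℚ) ^ k),
    Nat.cast_prod]
  simp only [map_pow, map_neg, map_one, add_right_comm m 1]

theorem choose_mul_ascFactorial_mul_descFactorial {n k : ℕ} (hk : k ≤ n) :
    n.choose k * ((n + 1).ascFactorial k * n.descFactorial (n - k)) =
      n ! * ((n + k).choose k * n.choose k) := by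
  rw [Nat.ascFactorial_eq_factorial_mul_choose, Nat.descFactorial_eq_factorial_mul_choose,
    Nat.choose_symm hk, ← Nat.choose_mul_factorial_mul_factorial hk]
  ring

theorem sum_neg_one_pow_mul_choose_smul_eps (n : ℕ) :
    ∑ k ∈ range (n + 1), ((-1) ^ k * (n + k).choose k * n.choose k : ℚ) •
        (1 + (harmonic (n + k) - harmonic n) • ε) =
      (-1 : ℚ) ^ n • (1 + harmonic n • ε : ℚ[ε]) := by
  have hvandermonde :=
    Ring.descPochhammer_smeval_add n (Commute.all (-((n : ℚ[ε]) + 1 + ε)) (n : ℚ[ε]))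
  rw [show -((n : ℚ[ε]) + 1 + ε) + (n : ℚ[ε]) = -(((0 : ℕ) : ℚ[ε]) + 1 + ε) by push_cast; ring,
    Nat.sum_antidiagonal_eq_sum_range_succ (fun i j => (n.choose i : ℚ[ε]) *
      ((descPochhammer ℤ i).smeval _ * (descPochhammer ℤ j).smeval _))] at hvandermonde
  simp only [descPochhammer_smeval_neg_natCast_sub_eps, descPochhammer_smeval_eq_descFactorial,
    Nat.one_ascFactorial, zero_add, harmonic_zero, sub_zero] at hvandermonde
  rw [← smul_right_inj (by positivity : (n ! : ℚ) ≠ 0), smul_smul, mul_comm (n ! : ℚ),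
    hvandermonde, smul_sum]
  refine sum_congr rfl fun k hk => ?_
  have h := congrArg (Nat.cast : ℕ → ℚ)
    (choose_mul_ascFactorial_mul_descFactorial (Nat.lt_succ_iff.mp (mem_range.mp hk)))
  push_cast at h
  rw [mul_comm _ ((n.descFactorial (n - k) : ℕ) : ℚ[ε]), ← nsmul_eq_mul, ← nsmul_eq_mul,
    ← Nat.cast_smul_eq_nsmul ℚ, ← Nat.cast_smul_eq_nsmul ℚ, smul_smul, smul_smul, smul_smul]
  congr 1
  linear_combination -(-1) ^ k * h

theorem stmt_12 (n : ℕ) :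
    ∑ k ∈ range (n + 1), (-1 : ℚ) ^ k * (Nat.choose (n + k) k) * (Nat.choose n k) * H (n + k) =
      (-1 : ℚ) ^ n * (2 * H n) := by
  have hdual := sum_neg_one_pow_mul_choose_smul_eps n
  have hvalue := congrArg fst hdual
  have hderiv := congrArg snd hdual
  simp only [smul_add, fst_sum, fst_add, fst_smul, fst_one, smul_eq_mul, mul_one, fst_eps, mul_zero,
    add_zero, snd_sum, snd_add, snd_smul, snd_one, snd_eps, zero_add] at hvalue hderiv
  simp only [H_eq_harmonic]
  calc _ = ∑ k ∈ range (n + 1), (-1 : ℚ) ^ k * (n + k).choose k * n.choose k *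
          (harmonic (n + k) - harmonic n) +
        (∑ k ∈ range (n + 1), (-1 : ℚ) ^ k * (n + k).choose k * n.choose k) * harmonic n := by
        rw [sum_mul, ← sum_add_distrib]
        exact sum_congr rfl fun k _ => by ring
    _ = _ := by rw [hderiv, hvalue]; ring
end
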